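/- Let F be a division ring and Λ = {α₁, …, αₙ} ⊂ F a set such that pᵢ^ℓ(αᵢ) ≠ 0 for each i, where pᵢ is the left minimal polynomial of Λ∖{αᵢ} (the monic generator of the right ideal of polynomials left-vanishing on Λ∖{αᵢ}). Then for any c₁, …, cₙ ∈ F, the polynomial f(z) = Σᵢ pᵢ(z)·pᵢ^ℓ(αᵢ)⁻¹·cᵢ satisfies f^ℓ(αᵢ) = cᵢ for all i. -/

import Mathlib

open Polynomial

/-- Left evaluation of a polynomial `f = Σ zʲ fⱼ` at `a`: `f^ℓ(a) = Σ aʲ fⱼ`.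
(Mathlib's `Polynomial.eval` is the right evaluation `Σ fⱼ aʲ`.) -/
noncomputable def lEval {F : Type*} [DivisionRing F] (a : F) (f : F[X]) : F :=
  f.sum fun j c => a ^ j * c

/-- p is the left minimal polynomial of Δ: the monic generator of the right ideal
of polynomials left-vanishing on Δ. -/
def IsLeftMinPoly {F : Type*} [DivisionRing F] (Δ : Set F) (p : F[X]) : Prop :=
  p.Monic ∧ (∀ a ∈ Δ, lEval a p = 0) ∧
    ∀ f : F[X], (∀ a ∈ Δ, lEval a f = 0) → ∃ h : F[X], f = p * h

/-
Left evaluation is additive and commutes with multiplication by constants on the right,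
`(f · r)^ℓ(a) = f^ℓ(a) · r`. Evaluating the interpolant at `αᵢ` therefore gives
`Σⱼ pⱼ^ℓ(αᵢ) · pⱼ^ℓ(αⱼ)⁻¹ · cⱼ`, in which every term with `j ≠ i` vanishes because `αᵢ` is a
left root of `pⱼ`, and the term `j = i` is `cᵢ`.
-/

section LeftEval

variable {F : Type*} [DivisionRing F]

lemma lEval_zero (a : F) : lEval a (0 : F[X]) = 0 :=
  sum_zero_index _

lemma lEval_add (a : F) (f g : F[X]) : lEval a (f + g) = lEval a f + lEval a g :=
  sum_add_index _ _ _ (fun _ => mul_zero _) (fun _ _ _ => mul_add _ _ _)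

lemma lEval_monomial (a : F) (j : ℕ) (c : F) : lEval a (monomial j c) = a ^ j * c :=
  sum_monomial_index _ _ (mul_zero _)

noncomputable def lEvalAddHom (a : F) : F[X] →+ F where
  toFun := lEval a
  map_zero' := lEval_zero a
  map_add' := lEval_add a

lemma lEval_sum {ι : Type*} (a : F) (s : Finset ι) (f : ι → F[X]) :
    lEval a (∑ j ∈ s, f j) = ∑ j ∈ s, lEval a (f j) :=
  map_sum (lEvalAddHom a) f s

lemma lEval_mul_C (a : F) (f : F[X]) (r : F) : lEval a (f * C r) = lEval a f * r := by
  induction f using Polynomial.induction_on' with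
  | add f g hf hg => rw [add_mul, lEval_add, lEval_add, hf, hg, add_mul]
  | monomial j c => rw [monomial_mul_C, lEval_monomial, lEval_monomial, mul_assoc]

lemma IsLeftMinPoly.lEval_eq_zero {Δ : Set F} {p : F[X]} (hp : IsLeftMinPoly Δ p) {a : F}
    (ha : a ∈ Δ) : lEval a p = 0 :=
  hp.2.1 a ha

end LeftEval

theorem stmt8_general {F : Type*} [DivisionRing F] (n : ℕ) (α : Fin n → F)
    (p : Fin n → F[X])
    (hp : ∀ i, IsLeftMinPoly {x | ∃ j, j ≠ i ∧ x = α j} (p i))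
    (hne : ∀ i, lEval (α i) (p i) ≠ 0) (c : Fin n → F) :
    ∀ i, lEval (α i) (∑ j, p j * C ((lEval (α j) (p j))⁻¹ * c j)) = c i := by
  intro i
  rw [lEval_sum, Finset.sum_eq_single i]
  · rw [lEval_mul_C, ← mul_assoc, mul_inv_cancel₀ (hne i), one_mul]
  · intro j _ hji
    rw [lEval_mul_C, (hp j).lEval_eq_zero ⟨i, hji.symm, rfl⟩, zero_mul]
  · exact fun hi => absurd (Finset.mem_univ i) hi

/-- Left Lagrange interpolation formula: with pᵢ the left minimal polynomial of
Λ∖{αᵢ} and pᵢ^ℓ(αᵢ) ≠ 0, the polynomial f = Σᵢ pᵢ·pᵢ^ℓ(αᵢ)⁻¹·cᵢ satisfies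
f^ℓ(αᵢ) = cᵢ for all i. -/
theorem stmt8 {F : Type*} [DivisionRing F] (n : ℕ) (α : Fin n → F)
    (hα : Function.Injective α) (p : Fin n → F[X])
    (hp : ∀ i, IsLeftMinPoly {x | ∃ j, j ≠ i ∧ x = α j} (p i))
    (hne : ∀ i, lEval (α i) (p i) ≠ 0) (c : Fin n → F) :
    ∀ i, lEval (α i) (∑ j, p j * C ((lEval (α j) (p j))⁻¹ * c j)) = c i :=
  stmt8_general n α p hp hne c
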